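/- Let (ρ_ξ)_{ξ∈Ξ} be a smooth model of strictly positive d×d density matrices, with SLDs L_{i,ξ} and invertible SLD Fisher matrix G(ξ) = [g_{ij}(ξ)], inverse [g^{ij}(ξ)]. Then the following are equivalent: (ii) there exist Hermitian matrices F¹,…,Fⁿ such that for all ξ ∈ Ξ and all i, Σⱼ g^{ij}(ξ) L_{j,ξ} = Fⁱ − Tr(ρ_ξFⁱ)·I; (iii) there exist Hermitian matrices F¹,…,Fⁿ such that for all ξ ∈ Ξ and all i, Σⱼ g^{ij}(ξ) L_{j,ξ} = Fⁱ − ξⁱ·I (which forces ξⁱ = Tr(ρ_ξFⁱ)); (iv) there exist Hermitian matrices F¹,…,Fⁿ such that for all ξ ∈ Ξ and all i, L_{i,ξ} lies in the real span of {F¹,…,Fⁿ, I} and ξⁱ = Tr(ρ_ξFⁱ). -/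

import Mathlib

open Matrix
open scoped ComplexOrder

noncomputable section

/-- The symmetrized (Jordan) product `A∘B := (AB+BA)/2`. -/
def jprod {d : ℕ} (A B : Matrix (Fin d) (Fin d) ℂ) : Matrix (Fin d) (Fin d) ℂ :=
  (1/2 : ℂ) • (A * B + B * A)

/-!
Write `Mⁱ = ∑ⱼ gⁱʲ Lⱼ` (`raiseIndex G L i`). Differentiating `Tr ρ_ξ = 1` gives `Tr(ρ Lₖ) = 0`, and
`∂ₖ Re Tr(ρ_ξ X) = Re Tr((ρ∘Lₖ) X)` pairs `Lₖ` with `Mⁱ` to `δⁱₖ`. Taking `Tr(ρ ·)` of (iii)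
gives (ii), and `Lᵢ = ∑ₖ gᵢₖ Mᵏ` gives (iv). Under (ii) the partial derivatives of
`ξ ↦ Re Tr(ρ_ξ Fⁱ) - ξⁱ` vanish, so it is constant on the connected set `Ξ` and the constant can be
absorbed into `Fⁱ`. Under (iv), differentiating `Tr(ρ_ξ Fʲ) = ξʲ` shows that `Re Tr(ρ ·)` and the
`Re Tr((ρ∘Lₖ) ·)` are dual to `1` and the `Fʲ - ξʲ`, which span `{F, 1}`; expanding `Lᵢ` in
this basis gives `Lᵢ = ∑ₖ gᵢₖ (Fᵏ - ξᵏ)`, which is (iii).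
-/

open Function Set Topology

theorem IsPreconnected.apply_eq_of_eventually_eq {X Y : Type*} [TopologicalSpace X] {s : Set X}
    (hs : IsPreconnected s) {f : X → Y} (hf : ∀ x ∈ s, ∀ᶠ y in 𝓝 x, f y = f x)
    {x y : X} (hx : x ∈ s) (hy : y ∈ s) : f x = f y := by
  have := isPreconnected_iff_preconnectedSpace.mp hs
  have hloc : IsLocallyConstant fun z : s => f z :=
    (IsLocallyConstant.iff_eventually_eq _).mpr fun z =>
      (continuous_subtype_val.tendsto z).eventually (hf z z.2)
  exact hloc.apply_eq_of_preconnectedSpace ⟨x, hx⟩ ⟨y, hy⟩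

section PartialDerivatives

variable {ι E : Type*} [DecidableEq ι] [NormedAddCommGroup E] [NormedSpace ℝ E]

theorem eventually_update_mem {s : Set (ι → ℝ)} (hs : IsOpen s) {x : ι → ℝ} (hx : x ∈ s)
    (k : ι) : ∀ᶠ t in 𝓝 (x k), update x k t ∈ s := by
  have hcont : Continuous (update x k) := continuous_const.update k continuous_id
  exact hcont.continuousAt.preimage_mem_nhds (hs.mem_nhds (by rwa [update_eq_self]))

theorem hasDerivAt_update_unique_of_eqOn {s : Set (ι → ℝ)} (hs : IsOpen s) {x : ι → ℝ}
    (hx : x ∈ s) {f g : (ι → ℝ) → E} (hfg : EqOn f g s) {k : ι} {a b : E}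
    (hf : HasDerivAt (fun t => f (update x k t)) a (x k))
    (hg : HasDerivAt (fun t => g (update x k t)) b (x k)) : a = b :=
  hf.unique <| hg.congr_of_eventuallyEq <|
    (eventually_update_mem hs hx k).mono fun _ ht => hfg ht

theorem eq_of_hasDerivAt_update_eq_zero_of_mem_pi [Fintype ι] {I : ι → Set ℝ}
    (hIo : ∀ j, IsOpen (I j)) (hIc : ∀ j, IsPreconnected (I j)) {f : (ι → ℝ) → E}
    (hf : ∀ y ∈ univ.pi I, ∀ k, HasDerivAt (fun t => f (update y k t)) 0 (y k))
    {x y : ι → ℝ} (hx : x ∈ univ.pi I) (hy : y ∈ univ.pi I) : f y = f x := by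
  suffices ∀ s : Finset ι, ∀ y ∈ univ.pi I, (∀ j ∉ s, y j = x j) → f y = f x from
    this Finset.univ y hy (by simp)
  intro s
  induction s using Finset.induction_on with
  | empty => exact fun y _ hyx => congrArg f (funext fun j => hyx j (Finset.notMem_empty j))
  | insert k s _ ih =>
    intro y hy hyx
    have hline : ∀ t ∈ I k, update y k t ∈ univ.pi I := fun t ht =>
      (update_mem_pi_iff_of_mem hy).mpr fun _ => ht
    have hslope : ∀ t ∈ I k, HasDerivAt (fun t => f (update y k t)) 0 t := fun t ht => by
      simpa only [update_idem, update_self] using hf _ (hline t ht) k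
    have hslice : f (update y k (y k)) = f (update y k (x k)) :=
      (hIo k).is_const_of_deriv_eq_zero (hIc k)
        (fun t ht => (hslope t ht).differentiableAt.differentiableWithinAt)
        (fun t ht => (hslope t ht).deriv) (hy k trivial) (hx k trivial)
    rw [update_eq_self] at hslice
    rw [hslice]
    refine ih _ (hline _ (hx k trivial)) fun j hj => ?_
    by_cases hjk : j = k
    · subst hjk; exact update_self ..
    · rw [update_of_ne hjk]; exact hyx j (by simp [hj, hjk])

theorem IsPreconnected.apply_eq_of_hasDerivAt_update_eq_zero [Fintype ι] {s : Set (ι → ℝ)}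
    (hs' : IsPreconnected s) (hs : IsOpen s) {f : (ι → ℝ) → E}
    (hf : ∀ y ∈ s, ∀ k, HasDerivAt (fun t => f (update y k t)) 0 (y k))
    {x y : ι → ℝ} (hx : x ∈ s) (hy : y ∈ s) : f x = f y := by
  refine hs'.apply_eq_of_eventually_eq (fun x hx => ?_) hx hy
  obtain ⟨r, hr, hball⟩ := Metric.isOpen_iff.mp hs x hx
  filter_upwards [Metric.ball_mem_nhds x hr] with y hy
  rw [ball_pi x hr] at hball hy
  exact eq_of_hasDerivAt_update_eq_zero_of_mem_pi (fun _ => Metric.isOpen_ball)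
    (fun _ => (convex_ball _ _).isPreconnected) (fun z hz => hf z (hball hz))
    (mem_univ_pi.mpr fun _ => Metric.mem_ball_self hr) hy

end PartialDerivatives

theorem Module.Dual.eq_sum_smul_of_mem_span {R V ι : Type*} [CommSemiring R] [AddCommMonoid V]
    [Module R V] [Fintype ι] [DecidableEq ι] {v : ι → V} {φ : ι → Module.Dual R V}
    (hφ : ∀ i j, φ i (v j) = if i = j then 1 else 0) {x : V}
    (hx : x ∈ Submodule.span R (range v)) : x = ∑ i, φ i x • v i := by
  obtain ⟨c, rfl⟩ := (Submodule.mem_span_range_iff_exists_fun R).mp hx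
  simp [map_sum, hφ]

section RaiseIndex

variable {ι R V : Type*} [CommRing R] [AddCommMonoid V] [Module R V]

theorem sum_smul_sum_smul {κ ι' : Type*} [Fintype κ] [Fintype ι'] (A : Matrix ι κ R)
    (B : Matrix κ ι' R) (X : ι' → V) (i : ι) :
    ∑ k, A i k • ∑ j, B k j • X j = ∑ j, (A * B) i j • X j := by
  simp only [Finset.smul_sum, smul_smul, mul_apply, Finset.sum_smul]
  exact Finset.sum_comm

variable [Fintype ι] [DecidableEq ι]

theorem sum_one_smul (X : ι → V) (i : ι) : ∑ j, (1 : Matrix ι ι R) i j • X j = X i := by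
  simp [one_apply]

def raiseIndex (G : Matrix ι ι R) (L : ι → V) (i : ι) : V :=
  ∑ j, G⁻¹ i j • L j

theorem sum_smul_raiseIndex {G : Matrix ι ι R} (hG : IsUnit G.det) (L : ι → V) (i : ι) :
    ∑ k, G i k • raiseIndex G L k = L i := by
  simp only [raiseIndex]
  rw [sum_smul_sum_smul, mul_nonsing_inv G hG, sum_one_smul]

theorem raiseIndex_sum_smul {G : Matrix ι ι R} (hG : IsUnit G.det) (N : ι → V) :
    raiseIndex G (fun j => ∑ k, G j k • N k) = N :=
  funext fun i => by rw [raiseIndex, sum_smul_sum_smul, nonsing_inv_mul G hG, sum_one_smul]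

end RaiseIndex

section Trace

variable {m : Type*} [Fintype m]

def reTraceMul [DecidableEq m] (A : Matrix m m ℂ) : Module.Dual ℝ (Matrix m m ℂ) :=
  Complex.reLm ∘ₗ traceLinearMap m ℝ ℂ ∘ₗ LinearMap.mulLeft ℝ A

@[simp]
theorem reTraceMul_apply [DecidableEq m] (A X : Matrix m m ℂ) :
    reTraceMul A X = (A * X).trace.re :=
  rfl

theorem ofReal_re_trace_mul {A B : Matrix m m ℂ} (hA : A.IsHermitian) (hB : B.IsHermitian) :
    ((A * B).trace.re : ℂ) = (A * B).trace := by
  refine Complex.conj_eq_iff_re.mp ?_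
  rw [← Complex.star_def, ← trace_conjTranspose, conjTranspose_mul, hA.eq, hB.eq, trace_mul_comm]

theorem re_trace_mul_mul_comm {A B C : Matrix m m ℂ} (hA : A.IsHermitian) (hB : B.IsHermitian)
    (hC : C.IsHermitian) : (A * B * C).trace.re = (A * C * B).trace.re := by
  rw [← Complex.conj_re, ← Complex.star_def, ← trace_conjTranspose, conjTranspose_mul,
    conjTranspose_mul, hA.eq, hB.eq, hC.eq, trace_mul_comm, Matrix.mul_assoc, trace_mul_comm]

end Trace

section JordanProduct

variable {d : ℕ}

theorem trace_jprod (P A : Matrix (Fin d) (Fin d) ℂ) : (jprod P A).trace = (P * A).trace := by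
  rw [jprod, trace_smul, trace_add, trace_mul_comm A P, smul_eq_mul]
  ring

theorem re_trace_jprod_mul {P A B : Matrix (Fin d) (Fin d) ℂ} (hP : P.IsHermitian)
    (hA : A.IsHermitian) (hB : B.IsHermitian) :
    (jprod P A * B).trace.re = (P * A * B).trace.re := by
  have hcyc : (A * P * B).trace = (P * B * A).trace := by
    rw [Matrix.mul_assoc, trace_mul_comm]
  rw [jprod, smul_mul, add_mul, trace_smul, trace_add, hcyc, smul_eq_mul, Complex.mul_re,
    Complex.add_re, re_trace_mul_mul_comm hP hB hA]
  norm_num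
  ring

end JordanProduct

/-- The data of a model at one point `ξ`: the state `P = ρ_ξ`, its SLDs `L` and their Fisher
matrix `G`. -/
structure IsSLDFrame {d n : ℕ} (P : Matrix (Fin d) (Fin d) ℂ)
    (L : Fin n → Matrix (Fin d) (Fin d) ℂ) (G : Matrix (Fin n) (Fin n) ℝ) : Prop where
  isHermitian : P.IsHermitian
  trace_eq_one : P.trace = 1
  isHermitian_sld : ∀ i, (L i).IsHermitian
  trace_mul_sld : ∀ i, (P * L i).trace = 0
  fisher_eq : ∀ i j, G i j = (P * L i * L j).trace.re
  isUnit_det : IsUnit G.det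

namespace IsSLDFrame

variable {d n : ℕ} {P : Matrix (Fin d) (Fin d) ℂ} {L : Fin n → Matrix (Fin d) (Fin d) ℂ}
  {G : Matrix (Fin n) (Fin n) ℝ}

theorem reTraceMul_jprod_sld (h : IsSLDFrame P L G) (k j : Fin n) :
    reTraceMul (jprod P (L k)) (L j) = G j k := by
  rw [reTraceMul_apply, re_trace_jprod_mul h.isHermitian (h.isHermitian_sld k)
    (h.isHermitian_sld j), re_trace_mul_mul_comm h.isHermitian (h.isHermitian_sld k)
    (h.isHermitian_sld j), h.fisher_eq]

theorem reTraceMul_jprod_smul_one (h : IsSLDFrame P L G) (k : Fin n) (c : ℂ) :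
    reTraceMul (jprod P (L k)) (c • 1) = 0 := by
  simp [trace_jprod, h.trace_mul_sld]

theorem trace_mul_raiseIndex (h : IsSLDFrame P L G) (i : Fin n) :
    (P * raiseIndex G L i).trace = 0 := by
  simp [raiseIndex, Matrix.mul_sum, h.trace_mul_sld]

theorem reTraceMul_jprod_raiseIndex (h : IsSLDFrame P L G) (k i : Fin n) :
    reTraceMul (jprod P (L k)) (raiseIndex G L i) = (1 : Matrix (Fin n) (Fin n) ℝ) i k := by
  rw [raiseIndex, map_sum, ← nonsing_inv_mul G h.isUnit_det, mul_apply]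
  simp only [map_smul, h.reTraceMul_jprod_sld, smul_eq_mul]

theorem reTraceMul_jprod_of_raiseIndex_eq (h : IsSLDFrame P L G) {i : Fin n}
    {F : Matrix (Fin d) (Fin d) ℂ} {c : ℂ} (hF : raiseIndex G L i = F - c • 1) (k : Fin n) :
    reTraceMul (jprod P (L k)) F = (1 : Matrix (Fin n) (Fin n) ℝ) i k := by
  rw [← sub_add_cancel F (c • 1), ← hF, map_add, h.reTraceMul_jprod_raiseIndex,
    h.reTraceMul_jprod_smul_one, add_zero]

theorem trace_mul_eq_of_raiseIndex_eq (h : IsSLDFrame P L G) {i : Fin n}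
    {F : Matrix (Fin d) (Fin d) ℂ} {x : ℝ} (hF : raiseIndex G L i = F - x • 1) :
    (P * F).trace = x := by
  have h0 := h.trace_mul_raiseIndex i
  rw [hF, Matrix.mul_sub, trace_sub, Matrix.mul_smul, Matrix.mul_one, trace_smul,
    h.trace_eq_one, Complex.real_smul, mul_one, sub_eq_zero] at h0
  exact h0

theorem mem_span_of_raiseIndex_eq (h : IsSLDFrame P L G) {F : Fin n → Matrix (Fin d) (Fin d) ℂ}
    {x : Fin n → ℝ} (hF : ∀ i, raiseIndex G L i = F i - x i • 1) (i : Fin n) :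
    L i ∈ Submodule.span ℝ (range F ∪ {1}) := by
  rw [← sum_smul_raiseIndex h.isUnit_det L i]
  refine Submodule.sum_mem _ fun k _ => Submodule.smul_mem _ _ ?_
  rw [hF k]
  exact Submodule.sub_mem _ (Submodule.subset_span (Or.inl ⟨k, rfl⟩))
    (Submodule.smul_mem _ _ (Submodule.subset_span (Or.inr rfl)))

theorem raiseIndex_eq_of_mem_span (h : IsSLDFrame P L G) {F : Fin n → Matrix (Fin d) (Fin d) ℂ}
    {x : Fin n → ℝ}
    (hFL : ∀ k j, reTraceMul (jprod P (L k)) (F j) = (1 : Matrix (Fin n) (Fin n) ℝ) k j)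
    (hFP : ∀ j, (P * F j).trace = x j) (hL : ∀ i, L i ∈ Submodule.span ℝ (range F ∪ {1})) :
    raiseIndex G L = fun i => F i - x i • 1 := by
  set N : Fin n → Matrix (Fin d) (Fin d) ℂ := fun j => F j - x j • 1
  set v : Option (Fin n) → Matrix (Fin d) (Fin d) ℂ := fun o => o.elim 1 N
  set φ : Option (Fin n) → Module.Dual ℝ (Matrix (Fin d) (Fin d) ℂ) :=
    fun o => o.elim (reTraceMul P) fun k => reTraceMul (jprod P (L k))
  have hφ : ∀ o o', φ o (v o') = if o = o' then 1 else 0 := by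
    rintro (_ | k) (_ | j)
    · simp [φ, v, h.trace_eq_one]
    · change reTraceMul P (F j - x j • 1) = 0
      rw [map_sub, map_smul, reTraceMul_apply, reTraceMul_apply, hFP, Matrix.mul_one,
        h.trace_eq_one]
      simp
    · change reTraceMul (jprod P (L k)) 1 = 0
      simpa only [one_smul] using h.reTraceMul_jprod_smul_one k 1
    · change reTraceMul (jprod P (L k)) (F j - x j • 1) = _
      rw [map_sub, hFL, ← Complex.coe_smul, h.reTraceMul_jprod_smul_one, sub_zero, one_apply]
      simp
  have hspan : Submodule.span ℝ (range F ∪ {1}) ≤ Submodule.span ℝ (range v) := by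
    rw [Submodule.span_le]
    rintro _ (⟨j, rfl⟩ | rfl)
    · have : F j = v (some j) + x j • v none := by simp [v, N]
      rw [this]
      exact Submodule.add_mem _ (Submodule.subset_span ⟨_, rfl⟩)
        (Submodule.smul_mem _ _ (Submodule.subset_span ⟨_, rfl⟩))
    · exact Submodule.subset_span ⟨none, rfl⟩
  have hexpand : ∀ i, L i = ∑ k, G i k • N k := fun i => by
    rw [Module.Dual.eq_sum_smul_of_mem_span hφ (hspan (hL i)), Fintype.sum_option]
    simp [φ, v, h.trace_mul_sld, h.reTraceMul_jprod_sld]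
  rw [funext hexpand]
  exact raiseIndex_sum_smul h.isUnit_det N

end IsSLDFrame

theorem hasDerivAt_reTraceMul {m : Type*} [Fintype m] [DecidableEq m] {g : ℝ → Matrix m m ℂ}
    {g' : Matrix m m ℂ} {x : ℝ} (hg : ∀ a b, HasDerivAt (fun t => g t a b) (g' a b) x)
    (X : Matrix m m ℂ) :
    HasDerivAt (fun t => reTraceMul (g t) X) (reTraceMul g' X) x := by
  have htrace : HasDerivAt (fun t => (g t * X).trace) (g' * X).trace x := by
    simp only [trace, diag, mul_apply]
    exact HasDerivAt.fun_sum fun a _ => HasDerivAt.fun_sum fun b _ => (hg a b).mul_const _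
  exact Complex.reCLM.hasFDerivAt.comp_hasDerivAt x htrace

theorem trace_mul_eq_zero_of_hasDerivAt {d n : ℕ} {Ξ : Set (Fin n → ℝ)} (hΞ : IsOpen Ξ)
    {ρ : (Fin n → ℝ) → Matrix (Fin d) (Fin d) ℂ} (hρ : ∀ η ∈ Ξ, (ρ η).trace = 1) {ξ : Fin n → ℝ}
    (hξ : ξ ∈ Ξ) (hρξ : (ρ ξ).IsHermitian) {A : Matrix (Fin d) (Fin d) ℂ} (hA : A.IsHermitian)
    {k : Fin n} (hd : HasDerivAt (fun t => reTraceMul (ρ (update ξ k t)) 1)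
      (reTraceMul (jprod (ρ ξ) A) 1) (ξ k)) :
    (ρ ξ * A).trace = 0 := by
  have h0 : reTraceMul (jprod (ρ ξ) A) 1 = 0 := hasDerivAt_update_unique_of_eqOn hΞ hξ
    (f := fun η => reTraceMul (ρ η) 1) (g := fun _ => 1) (fun η hη => by simp [hρ η hη]) hd
    (hasDerivAt_const _ _)
  rw [reTraceMul_apply, Matrix.mul_one, trace_jprod] at h0
  rw [← ofReal_re_trace_mul hρξ hA, h0, Complex.ofReal_zero]

theorem exists_raiseIndex_eq_sub_coord {d n : ℕ} {Ξ : Set (Fin n → ℝ)} (hΞ : IsOpen Ξ)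
    (hΞ' : IsPreconnected Ξ) {ρ : (Fin n → ℝ) → Matrix (Fin d) (Fin d) ℂ}
    {L : (Fin n → ℝ) → Fin n → Matrix (Fin d) (Fin d) ℂ}
    {G : (Fin n → ℝ) → Matrix (Fin n) (Fin n) ℝ} (hframe : ∀ ξ ∈ Ξ, IsSLDFrame (ρ ξ) (L ξ) (G ξ))
    (hderiv : ∀ ξ ∈ Ξ, ∀ k X, HasDerivAt (fun t => reTraceMul (ρ (update ξ k t)) X)
      (reTraceMul (jprod (ρ ξ) (L ξ k)) X) (ξ k))
    {F : Fin n → Matrix (Fin d) (Fin d) ℂ} (hFh : ∀ i, (F i).IsHermitian)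
    (hF : ∀ ξ ∈ Ξ, ∀ i, raiseIndex (G ξ) (L ξ) i = F i - (ρ ξ * F i).trace • 1) :
    ∃ F' : Fin n → Matrix (Fin d) (Fin d) ℂ, (∀ i, (F' i).IsHermitian) ∧
      ∀ ξ ∈ Ξ, ∀ i, raiseIndex (G ξ) (L ξ) i = F' i - ξ i • 1 := by
  rcases Ξ.eq_empty_or_nonempty with rfl | ⟨ξ₀, hξ₀⟩
  · exact ⟨F, hFh, by simp⟩
  set c : Fin n → ℝ := fun i => reTraceMul (ρ ξ₀) (F i) - ξ₀ i
  have hconst : ∀ i, ∀ ξ ∈ Ξ, reTraceMul (ρ ξ) (F i) - ξ i = c i := by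
    refine fun i ξ hξ => hΞ'.apply_eq_of_hasDerivAt_update_eq_zero hΞ
      (f := fun η => reTraceMul (ρ η) (F i) - η i) (fun ζ hζ k => ?_) hξ hξ₀
    have hd := (hderiv ζ hζ k (F i)).sub (hasDerivAt_pi.mp (hasDerivAt_update ζ k (ζ k)) i)
    rwa [(hframe ζ hζ).reTraceMul_jprod_of_raiseIndex_eq (hF ζ hζ i), one_eq_pi_single,
      Pi.single_comm, sub_self] at hd
  refine ⟨fun i => F i - c i • 1, fun i => (hFh i).sub (isHermitian_one.smul (.all _)),
    fun ξ hξ i => ?_⟩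
  beta_reduce
  rw [hF ξ hξ i, ← ofReal_re_trace_mul (hframe ξ hξ).isHermitian (hFh i), ← reTraceMul_apply,
    Complex.coe_smul, ← hconst i ξ hξ]
  module

theorem e_autoparallel_m_affine_characterizations_general (d n : ℕ)
    (Ξ : Set (Fin n → ℝ)) (hΞopen : IsOpen Ξ) (hΞconn : IsPreconnected Ξ)
    (ρ : (Fin n → ℝ) → Matrix (Fin d) (Fin d) ℂ)
    (hρ : ∀ ξ ∈ Ξ, (ρ ξ).PosDef ∧ (ρ ξ).trace = 1)
    (L : (Fin n → ℝ) → Fin n → Matrix (Fin d) (Fin d) ℂ)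
    (hLherm : ∀ ξ ∈ Ξ, ∀ i, (L ξ i).IsHermitian)
    (hLsld : ∀ ξ ∈ Ξ, ∀ i, ∀ a b : Fin d,
      HasDerivAt (fun t => ρ (Function.update ξ i t) a b)
        ((jprod (ρ ξ) (L ξ i)) a b) (ξ i))
    (G : (Fin n → ℝ) → Matrix (Fin n) (Fin n) ℝ)
    (hG : ∀ ξ ∈ Ξ, ∀ i j, G ξ i j = (Matrix.trace (ρ ξ * L ξ i * L ξ j)).re)
    (hGinv : ∀ ξ ∈ Ξ, IsUnit (G ξ).det) :
    ((∃ F : Fin n → Matrix (Fin d) (Fin d) ℂ, (∀ i, (F i).IsHermitian) ∧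
        ∀ ξ ∈ Ξ, ∀ i, (∑ j, (G ξ)⁻¹ i j • L ξ j) =
          F i - (Matrix.trace (ρ ξ * F i)) • (1 : Matrix (Fin d) (Fin d) ℂ)) ↔
      (∃ F : Fin n → Matrix (Fin d) (Fin d) ℂ, (∀ i, (F i).IsHermitian) ∧
        ∀ ξ ∈ Ξ, ∀ i, (∑ j, (G ξ)⁻¹ i j • L ξ j) =
          F i - ξ i • (1 : Matrix (Fin d) (Fin d) ℂ))) ∧
    ((∃ F : Fin n → Matrix (Fin d) (Fin d) ℂ, (∀ i, (F i).IsHermitian) ∧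
        ∀ ξ ∈ Ξ, ∀ i, (∑ j, (G ξ)⁻¹ i j • L ξ j) =
          F i - ξ i • (1 : Matrix (Fin d) (Fin d) ℂ)) ↔
      (∃ F : Fin n → Matrix (Fin d) (Fin d) ℂ, (∀ i, (F i).IsHermitian) ∧
        ∀ ξ ∈ Ξ, ∀ i,
          L ξ i ∈ Submodule.span ℝ
            (Set.range F ∪ {(1 : Matrix (Fin d) (Fin d) ℂ)}) ∧
          Matrix.trace (ρ ξ * F i) = (ξ i : ℂ))) := by
  have hderiv : ∀ ξ ∈ Ξ, ∀ k X, HasDerivAt (fun t => reTraceMul (ρ (update ξ k t)) X)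
      (reTraceMul (jprod (ρ ξ) (L ξ k)) X) (ξ k) := fun ξ hξ k =>
    hasDerivAt_reTraceMul (hLsld ξ hξ k)
  have hframe : ∀ ξ ∈ Ξ, IsSLDFrame (ρ ξ) (L ξ) (G ξ) := fun ξ hξ =>
    ⟨(hρ ξ hξ).1.isHermitian, (hρ ξ hξ).2, hLherm ξ hξ,
      fun k => trace_mul_eq_zero_of_hasDerivAt hΞopen (fun η hη => (hρ η hη).2) hξ
        (hρ ξ hξ).1.isHermitian (hLherm ξ hξ k) (hderiv ξ hξ k 1),
      hG ξ hξ, hGinv ξ hξ⟩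
  refine ⟨⟨?_, ?_⟩, ?_, ?_⟩ <;> rintro ⟨F, hFh, hF⟩
  · exact exists_raiseIndex_eq_sub_coord hΞopen hΞconn hframe hderiv hFh hF
  · refine ⟨F, hFh, fun ξ hξ i => ?_⟩
    rw [(hframe ξ hξ).trace_mul_eq_of_raiseIndex_eq (hF ξ hξ i), Complex.coe_smul]
    exact hF ξ hξ i
  · exact ⟨F, hFh, fun ξ hξ i => ⟨(hframe ξ hξ).mem_span_of_raiseIndex_eq (hF ξ hξ) i,
      (hframe ξ hξ).trace_mul_eq_of_raiseIndex_eq (hF ξ hξ i)⟩⟩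
  · refine ⟨F, hFh, fun ξ hξ i => congrFun ((hframe ξ hξ).raiseIndex_eq_of_mem_span
      (fun k j => ?_) (fun j => (hF ξ hξ j).2) (fun j => (hF ξ hξ j).1)) i⟩
    rw [one_eq_pi_single]
    exact hasDerivAt_update_unique_of_eqOn hΞopen hξ (f := fun η => reTraceMul (ρ η) (F j))
      (g := fun η => η j) (fun η hη => by simp [(hF η hη j).2]) (hderiv ξ hξ k (F j))
      (hasDerivAt_pi.mp (hasDerivAt_update ξ k (ξ k)) j)

/-- For a smooth model `(ρ_ξ)` of strictly positive density matrices
with SLDs `L_{i,ξ}` and invertible SLD Fisher matrix `G(ξ)`, the conditions (ii), (iii),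
(iv) characterizing e-autoparallelity with `ξ` m-affine are equivalent. -/
theorem e_autoparallel_m_affine_characterizations (d n : ℕ)
    (Ξ : Set (Fin n → ℝ)) (hΞopen : IsOpen Ξ) (hΞconn : IsPreconnected Ξ)
    (ρ : (Fin n → ℝ) → Matrix (Fin d) (Fin d) ℂ)
    (hρ : ∀ ξ ∈ Ξ, (ρ ξ).PosDef ∧ (ρ ξ).trace = 1)
    (hinj : Set.InjOn ρ Ξ)
    (L : (Fin n → ℝ) → Fin n → Matrix (Fin d) (Fin d) ℂ)
    (hLherm : ∀ ξ ∈ Ξ, ∀ i, (L ξ i).IsHermitian)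
    (hLsld : ∀ ξ ∈ Ξ, ∀ i, ∀ a b : Fin d,
      HasDerivAt (fun t => ρ (Function.update ξ i t) a b)
        ((jprod (ρ ξ) (L ξ i)) a b) (ξ i))
    (G : (Fin n → ℝ) → Matrix (Fin n) (Fin n) ℝ)
    (hG : ∀ ξ ∈ Ξ, ∀ i j, G ξ i j = (Matrix.trace (ρ ξ * L ξ i * L ξ j)).re)
    (hGinv : ∀ ξ ∈ Ξ, IsUnit (G ξ).det) :
    ((∃ F : Fin n → Matrix (Fin d) (Fin d) ℂ, (∀ i, (F i).IsHermitian) ∧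
        ∀ ξ ∈ Ξ, ∀ i, (∑ j, (G ξ)⁻¹ i j • L ξ j) =
          F i - (Matrix.trace (ρ ξ * F i)) • (1 : Matrix (Fin d) (Fin d) ℂ)) ↔
      (∃ F : Fin n → Matrix (Fin d) (Fin d) ℂ, (∀ i, (F i).IsHermitian) ∧
        ∀ ξ ∈ Ξ, ∀ i, (∑ j, (G ξ)⁻¹ i j • L ξ j) =
          F i - ξ i • (1 : Matrix (Fin d) (Fin d) ℂ))) ∧
    ((∃ F : Fin n → Matrix (Fin d) (Fin d) ℂ, (∀ i, (F i).IsHermitian) ∧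
        ∀ ξ ∈ Ξ, ∀ i, (∑ j, (G ξ)⁻¹ i j • L ξ j) =
          F i - ξ i • (1 : Matrix (Fin d) (Fin d) ℂ)) ↔
      (∃ F : Fin n → Matrix (Fin d) (Fin d) ℂ, (∀ i, (F i).IsHermitian) ∧
        ∀ ξ ∈ Ξ, ∀ i,
          L ξ i ∈ Submodule.span ℝ
            (Set.range F ∪ {(1 : Matrix (Fin d) (Fin d) ℂ)}) ∧
          Matrix.trace (ρ ξ * F i) = (ξ i : ℂ))) :=
  e_autoparallel_m_affine_characterizations_general d n Ξ hΞopen hΞconn ρ hρ L hLherm hLsld G hG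
    hGinv
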